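/- arXiv:0806.4666 — 2 statements merged into one kernel-verified Lean document; each statement's English description precedes it below -/
import Mathlib

section
/- Let μ > 0 and let v_{p,q}(r) = φ_{p,q}((r^{2μ}-1)/(r^{2μ}+1)) where φ_{p,q}(t) = (1-t²)^{q/(2μ)} F(p + 2q/μ + 1, -p, q/μ + 1, (1-t)/2) and F is the Gauss hypergeometric function. Then v_{p,q} satisfies the ODE v'' + (1/r) v' + (λ · 4μ²r^{2μ-2}/(r^{2μ}+1)² - q²/r²) v = 0 on (0,∞) with λ = (p + q/μ)(1 + p + q/μ). -/
/-- The Pochhammer symbol `(α)_i = α(α+1)⋯(α+i-1)`. -/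
noncomputable def poch (α : ℝ) (i : ℕ) : ℝ := ∏ j ∈ Finset.range i, (α + j)

/-- The Gauss hypergeometric series, truncated at degree `deg` (the series
terminates when `b` is a nonpositive integer `-deg`). -/
noncomputable def hyperF (a b c x : ℝ) (deg : ℕ) : ℝ :=
  ∑ i ∈ Finset.range (deg + 1), poch a i * poch b i / (Nat.factorial i * poch c i) * x ^ i

/-!
With `u = r ^ (2 * μ)`, the substitution `t = (u - 1) / (u + 1)` gives
`1 - t ^ 2 = 4 * u / (u + 1) ^ 2` and `(1 - t) / 2 = 1 / (u + 1)`, so `v` is a finite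
combination of the functions `r ^ q * (r ^ (2 * μ) + 1) ^ (-(q / μ + k))`, `k ≤ p`. The
differential operator of the equation sends the `k`-th of them to a combination of
`r ^ (q + 2 * μ - 2) * (r ^ (2 * μ) + 1) ^ (-(q / μ + k + j))` for `j = 1, 2`, and the contiguous
recursion of the hypergeometric coefficients makes the resulting sum telescope. It stops at
`k = p` because `λ = (p + q / μ) * (p + q / μ + 1)`.
-/

open Finset Set

lemma poch_succ (α : ℝ) (k : ℕ) : poch α (k + 1) = poch α k * (α + k) :=
  prod_range_succ _ _

lemma poch_ne_zero {α : ℝ} (hα : ∀ j : ℕ, α + j ≠ 0) (i : ℕ) : poch α i ≠ 0 :=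
  prod_ne_zero_iff.2 fun j _ => hα j

noncomputable def hyperCoeff (a b c : ℝ) (i : ℕ) : ℝ :=
  poch a i * poch b i / (Nat.factorial i * poch c i)

lemma hyperCoeff_succ (a b : ℝ) {c : ℝ} (hc : ∀ j : ℕ, c + j ≠ 0) (k : ℕ) :
    ((k : ℝ) + 1) * (c + k) * hyperCoeff a b c (k + 1)
      = (a + k) * (b + k) * hyperCoeff a b c k := by
  have hpoch := poch_ne_zero hc k
  have hck := hc k
  simp only [hyperCoeff, poch_succ, Nat.factorial_succ]
  push_cast
  field_simp

lemma sum_range_mul_add_mul_succ_eq_zero {R : Type*} [Semiring R] (n : ℕ) (A B h : ℕ → R)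
    (hA : A 0 = 0) (hB : B n = 0) (hAB : ∀ k, A (k + 1) + B k = 0) :
    ∑ k ∈ range (n + 1), (A k * h k + B k * h (k + 1)) = 0 := by
  rw [sum_add_distrib, sum_range_succ' (fun k => A k * h k),
    sum_range_succ (fun k => B k * h (k + 1)), hA, hB, zero_mul, zero_mul, add_zero, add_zero,
    ← sum_add_distrib]
  exact sum_eq_zero fun k _ => by rw [← add_mul, hAB, zero_mul]

lemma eqOn_deriv_of_hasDerivAt {𝕜 F : Type*} [NontriviallyNormedField 𝕜]
    [NormedAddCommGroup F] [NormedSpace 𝕜 F] {f g g' : 𝕜 → F} {s : Set 𝕜} (hs : IsOpen s)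
    (hfg : EqOn f g s) (hg : ∀ x ∈ s, HasDerivAt g (g' x) x) : EqOn (deriv f) g' s :=
  fun x hx => (hfg.deriv hs hx).trans (hg x hx).deriv

noncomputable def radialTerm (μ a α r : ℝ) : ℝ := r ^ a * (r ^ (2 * μ) + 1) ^ (-α)

noncomputable def radialTermDeriv (μ a α r : ℝ) : ℝ :=
  a * radialTerm μ (a - 1) α r - 2 * μ * α * radialTerm μ (a + 2 * μ - 1) (α + 1) r

noncomputable def radialTermDeriv2 (μ a α r : ℝ) : ℝ :=
  a * radialTermDeriv μ (a - 1) α r - 2 * μ * α * radialTermDeriv μ (a + 2 * μ - 1) (α + 1) r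

section radialTerm

variable {μ r : ℝ}

lemma hasDerivAt_radialTerm (a α : ℝ) (hr : 0 < r) :
    HasDerivAt (radialTerm μ a α) (radialTermDeriv μ a α r) r := by
  have hs : 0 < r ^ (2 * μ) + 1 := by positivity
  have hpow := ((Real.hasDerivAt_rpow_const (p := 2 * μ) (Or.inl hr.ne')).add_const 1).rpow_const
    (p := -α) (Or.inl hs.ne')
  refine ((Real.hasDerivAt_rpow_const (Or.inl hr.ne')).mul hpow).congr_deriv ?_
  simp only [radialTermDeriv, radialTerm, Real.rpow_sub hr, Real.rpow_add hr, neg_add',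
    Real.rpow_sub hs, Real.rpow_one]
  ring

lemma hasDerivAt_radialTermDeriv (a α : ℝ) (hr : 0 < r) :
    HasDerivAt (radialTermDeriv μ a α) (radialTermDeriv2 μ a α r) r :=
  ((hasDerivAt_radialTerm _ _ hr).const_mul a).sub
    ((hasDerivAt_radialTerm _ _ hr).const_mul (2 * μ * α))

lemma radialTerm_ode (hμ : μ ≠ 0) (q lam κ : ℝ) (hr : 0 < r) :
    radialTermDeriv2 μ q (q / μ + κ) r + 1 / r * radialTermDeriv μ q (q / μ + κ) r
      + (lam * (4 * μ ^ 2 * r ^ (2 * μ - 2) / (r ^ (2 * μ) + 1) ^ 2) - q ^ 2 / r ^ 2)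
        * radialTerm μ q (q / μ + κ) r
    = 4 * μ ^ 2 * (κ * (q / μ + κ) * radialTerm μ (q + 2 * μ - 2) (q / μ + κ + 1) r
        + (lam - (q / μ + κ) * (q / μ + κ + 1))
          * radialTerm μ (q + 2 * μ - 2) (q / μ + κ + 2) r) := by
  have hs : 0 < r ^ (2 * μ) + 1 := by positivity
  have hsκ : (r ^ (2 * μ) + 1) ^ κ ≠ 0 := by positivity
  have hsq : (r ^ (2 * μ) + 1) ^ (q / μ) ≠ 0 := by positivity
  simp only [radialTermDeriv2, radialTermDeriv, radialTerm, Real.rpow_sub hr, Real.rpow_add hr,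
    Real.rpow_neg hs.le, Real.rpow_add hs, Real.rpow_one, Real.rpow_two]
  field_simp
  ring

lemma sum_radialTerm_ode_eq_zero (hμ : μ ≠ 0) (q : ℝ) (n : ℕ) (c : ℕ → ℝ)
    (hc : ∀ k : ℕ, ((k : ℝ) + 1) * (q / μ + k + 1) * c (k + 1)
      = ((q / μ + k) * (q / μ + k + 1) - (n + q / μ) * (1 + n + q / μ)) * c k)
    (hr : 0 < r) :
    ∑ k ∈ range (n + 1), c k * radialTermDeriv2 μ q (q / μ + k) r
      + 1 / r * ∑ k ∈ range (n + 1), c k * radialTermDeriv μ q (q / μ + k) r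
      + ((n + q / μ) * (1 + n + q / μ) * (4 * μ ^ 2 * r ^ (2 * μ - 2) / (r ^ (2 * μ) + 1) ^ 2)
        - q ^ 2 / r ^ 2) * ∑ k ∈ range (n + 1), c k * radialTerm μ q (q / μ + k) r = 0 := by
  set lam : ℝ := (n + q / μ) * (1 + n + q / μ)
  set h : ℕ → ℝ := fun j => radialTerm μ (q + 2 * μ - 2) (q / μ + j + 1) r
  calc _ = ∑ k ∈ range (n + 1), (4 * μ ^ 2 * (k * (q / μ + k)) * c k * h k
        + 4 * μ ^ 2 * (lam - (q / μ + k) * (q / μ + k + 1)) * c k * h (k + 1)) := by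
        rw [mul_sum, mul_sum, ← sum_add_distrib, ← sum_add_distrib]
        refine sum_congr rfl fun k _ => ?_
        have hk : q / μ + ((k + 1 : ℕ) : ℝ) + 1 = q / μ + k + 2 := by push_cast; ring
        simp only [h, hk]
        linear_combination c k * radialTerm_ode hμ q lam k hr
    _ = 0 := sum_range_mul_add_mul_succ_eq_zero n _ _ h (by simp) (by simp only [lam]; ring)
        fun k => by push_cast; linear_combination 4 * μ ^ 2 * hc k

lemma rpow_mul_hyperF_eq_sum_radialTerm (hμ : μ ≠ 0) (hr : 0 < r) (q a b c : ℝ) (n : ℕ) :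
    (1 - ((r ^ (2 * μ) - 1) / (r ^ (2 * μ) + 1)) ^ 2) ^ (q / (2 * μ)) *
      hyperF a b c ((1 - (r ^ (2 * μ) - 1) / (r ^ (2 * μ) + 1)) / 2) n
    = ∑ k ∈ range (n + 1),
        4 ^ (q / (2 * μ)) * hyperCoeff a b c k * radialTerm μ q (q / μ + k) r := by
  set s := r ^ (2 * μ) + 1
  have hs : 0 < s := by positivity
  have h_one_sub_sq : 1 - ((r ^ (2 * μ) - 1) / s) ^ 2 = 4 * r ^ (2 * μ) / s ^ 2 := by
    field_simp; ring
  have h_half : (1 - (r ^ (2 * μ) - 1) / s) / 2 = s⁻¹ := by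
    field_simp; ring
  have h_prefactor : (4 * r ^ (2 * μ) / s ^ 2) ^ (q / (2 * μ))
      = 4 ^ (q / (2 * μ)) * r ^ q * s ^ (-(q / μ)) := by
    rw [Real.div_rpow (by positivity) (by positivity), Real.mul_rpow (by norm_num) (by positivity),
      ← Real.rpow_mul hr.le, ← Real.rpow_natCast s 2, ← Real.rpow_mul hs.le,
      Real.rpow_neg hs.le,
      show 2 * μ * (q / (2 * μ)) = q by field_simp,
      show ((2 : ℕ) : ℝ) * (q / (2 * μ)) = q / μ by push_cast; field_simp, div_eq_mul_inv]
  rw [h_one_sub_sq, h_half, h_prefactor, hyperF, mul_sum]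
  refine sum_congr rfl fun k _ => ?_
  rw [radialTerm, neg_add, Real.rpow_add hs, Real.rpow_neg hs.le (k : ℝ), Real.rpow_natCast,
    hyperCoeff, inv_pow]
  ring

end radialTerm

theorem stmt_4 (μ : ℝ) (hμ : 0 < μ) (p q : ℕ) :
    let lam : ℝ := ((p : ℝ) + q / μ) * (1 + p + q / μ)
    let φ : ℝ → ℝ := fun t =>
      (1 - t ^ 2) ^ ((q : ℝ) / (2 * μ)) *
        hyperF ((p : ℝ) + 2 * q / μ + 1) (-(p : ℝ)) ((q : ℝ) / μ + 1) ((1 - t) / 2) p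
    let v : ℝ → ℝ := fun r => φ ((r ^ (2 * μ) - 1) / (r ^ (2 * μ) + 1))
    ∀ r : ℝ, 0 < r →
      deriv (deriv v) r + (1 / r) * deriv v r +
        (lam * (4 * μ ^ 2 * r ^ (2 * μ - 2) / (r ^ (2 * μ) + 1) ^ 2)
          - (q : ℝ) ^ 2 / r ^ 2) * v r = 0 := by
  intro lam φ v r hr
  set c : ℕ → ℝ := fun k => 4 ^ ((q : ℝ) / (2 * μ)) *
    hyperCoeff ((p : ℝ) + 2 * q / μ + 1) (-(p : ℝ)) ((q : ℝ) / μ + 1) k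
  have hc (k : ℕ) : ((k : ℝ) + 1) * (q / μ + k + 1) * c (k + 1)
      = ((q / μ + k) * (q / μ + k + 1) - (p + q / μ) * (1 + p + q / μ)) * c k := by
    have := hyperCoeff_succ ((p : ℝ) + 2 * q / μ + 1) (-(p : ℝ))
      (c := (q : ℝ) / μ + 1) (fun j => by positivity) k
    linear_combination 4 ^ ((q : ℝ) / (2 * μ)) * this
  have hv :
      EqOn v (fun x => ∑ k ∈ range (p + 1), c k * radialTerm μ q (q / μ + k) x) (Ioi 0) :=
    fun x hx => rpow_mul_hyperF_eq_sum_radialTerm hμ.ne' hx _ _ _ _ _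
  have hv' := eqOn_deriv_of_hasDerivAt isOpen_Ioi hv fun x hx =>
    HasDerivAt.fun_sum fun k _ => (hasDerivAt_radialTerm _ _ hx).const_mul (c k)
  have hv'' := eqOn_deriv_of_hasDerivAt isOpen_Ioi hv' fun x hx =>
    HasDerivAt.fun_sum fun k _ => (hasDerivAt_radialTermDeriv _ _ hx).const_mul (c k)
  rw [hv'' hr, hv' hr, hv hr]
  exact sum_radialTerm_ode_eq_zero hμ.ne' q p c hc hr
end

section
/- If z̃(z) is a function near 0 in ℂ with (z/z̃)^m → 1 and z^m − z̃^m = O(|z|^{α+m}) for some integer m ≥ 1 and α > 0, then z − z̃ = O(|z|^{α+1}). -/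
/-!
Factor `z ^ m - w ^ m = (z - w) * S` with `S = ∑ i < m, z ^ i * w ^ (m - 1 - i)`. Since `w / z → 1`,
homogeneity gives `S / z ^ (m - 1) → m ≠ 0`, so `S` is of exact order `|z| ^ (m - 1)`; dividing the
bound on `z ^ m - w ^ m` by `S` then costs exactly the factor `|z| ^ (m - 1)`.
-/

open Topology Filter Asymptotics Finset

theorem geom_sum₂_mul_mul {R : Type*} [CommSemiring R] (c x y : R) (n : ℕ) :
    ∑ i ∈ range n, (c * x) ^ i * (c * y) ^ (n - 1 - i) =
      c ^ (n - 1) * ∑ i ∈ range n, x ^ i * y ^ (n - 1 - i) := by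
  rw [mul_sum]
  refine sum_congr rfl fun i hi => ?_
  have hc : c ^ (n - 1) = c ^ i * c ^ (n - 1 - i) := by
    rw [← pow_add, Nat.add_sub_cancel' (Nat.le_sub_one_of_lt (mem_range.mp hi))]
  rw [hc, mul_pow, mul_pow]
  ring

section

variable {α 𝕜 : Type*} [NormedField 𝕜] {l : Filter α} {z w : α → 𝕜}

theorem tendsto_geom_sum₂_div_pow (hz : ∀ᶠ x in l, z x ≠ 0)
    (hwz : Tendsto (fun x => w x / z x) l (𝓝 1)) (n : ℕ) :
    Tendsto (fun x => (∑ i ∈ range n, z x ^ i * w x ^ (n - 1 - i)) / z x ^ (n - 1)) l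
      (𝓝 n) := by
  have hlim : Tendsto (fun x => ∑ i ∈ range n, (1 : 𝕜) ^ i * (w x / z x) ^ (n - 1 - i)) l
      (𝓝 (∑ i ∈ range n, (1 : 𝕜) ^ i * 1 ^ (n - 1 - i))) :=
    tendsto_finsetSum _ fun i _ => tendsto_const_nhds.mul (hwz.pow _)
  rw [geom_sum₂_self, one_pow, mul_one] at hlim
  refine hlim.congr' ?_
  filter_upwards [hz] with x hx
  rw [eq_div_iff (pow_ne_zero _ hx), mul_comm, ← geom_sum₂_mul_mul, mul_one,
    mul_div_cancel₀ _ hx]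

theorem isTheta_pow_geom_sum₂ [CharZero 𝕜] {m : ℕ} (hm : m ≠ 0) (hz : ∀ᶠ x in l, z x ≠ 0)
    (hwz : Tendsto (fun x => w x / z x) l (𝓝 1)) :
    (fun x => z x ^ (m - 1)) =Θ[l] fun x => ∑ i ∈ range m, z x ^ i * w x ^ (m - 1 - i) :=
  isTheta_of_div_tendsto_nhds_ne_zero (tendsto_geom_sum₂_div_pow hz hwz m)
    (Nat.cast_ne_zero.mpr hm)

theorem isBigO_sub_of_isBigO_pow_sub [CharZero 𝕜] {m : ℕ} {g : α → ℝ} (hm : m ≠ 0)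
    (hzw : Tendsto (fun x => z x / w x) l (𝓝 1))
    (h : (fun x => z x ^ m - w x ^ m) =O[l] fun x => ‖z x‖ ^ (m - 1) * g x) :
    (fun x => z x - w x) =O[l] g := by
  have hz : ∀ᶠ x in l, z x ≠ 0 := by
    filter_upwards [hzw.eventually_ne one_ne_zero] with x hx hzx
    simp [hzx] at hx
  have hwz : Tendsto (fun x => w x / z x) l (𝓝 1) := by
    simpa only [inv_div, inv_one] using hzw.inv₀ one_ne_zero
  set S := fun x => ∑ i ∈ range m, z x ^ i * w x ^ (m - 1 - i)
  have hS : (fun x => ‖z x‖ ^ (m - 1)) =Θ[l] S := by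
    simpa only [norm_pow] using (isTheta_pow_geom_sum₂ hm hz hwz).norm_left
  have hS0 : ∀ᶠ x in l, S x ≠ 0 := by
    filter_upwards [hS.eq_zero_iff, hz] with x hx hzx
    exact fun hSx => pow_ne_zero _ (norm_ne_zero_iff.mpr hzx) (hx.mpr hSx)
  have hquot : (fun x => (z x ^ m - w x ^ m) * (S x)⁻¹) =O[l]
      fun x => ‖z x‖ ^ (m - 1) * g x * (‖z x‖ ^ (m - 1))⁻¹ :=
    h.mul hS.symm.inv.isBigO
  refine hquot.congr' ?_ ?_
  · filter_upwards [hS0] with x hx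
    rw [← geom_sum₂_mul, mul_comm]
    exact inv_mul_cancel_left₀ hx _
  · filter_upwards [hz] with x hx
    have : ‖z x‖ ≠ 0 := norm_ne_zero_iff.mpr hx
    field_simp

end

theorem stmt_16_general (m : ℕ) (hm : 1 ≤ m) (α : ℝ) (ztil : ℂ → ℂ)
    (h0 : Tendsto (fun z => z / ztil z) (𝓝[≠] (0 : ℂ)) (𝓝 1))
    (h2 : (fun z => z ^ m - ztil z ^ m) =O[𝓝[≠] (0 : ℂ)]
      fun z => ‖z‖ ^ (α + m)) :
    (fun z => z - ztil z) =O[𝓝[≠] (0 : ℂ)] fun z => ‖z‖ ^ (α + 1) := by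
  have hsplit : (fun z : ℂ => ‖z‖ ^ (α + m)) =ᶠ[𝓝[≠] 0]
      fun z => ‖z‖ ^ (m - 1) * ‖z‖ ^ (α + 1) := by
    filter_upwards [self_mem_nhdsWithin] with z hz
    obtain ⟨k, rfl⟩ := Nat.exists_eq_add_of_le' hm
    rw [Nat.add_sub_cancel, ← Real.rpow_natCast, ← Real.rpow_add (norm_pos_iff.mpr hz)]
    push_cast
    ring_nf
  exact isBigO_sub_of_isBigO_pow_sub (by omega) h0 (h2.congr' .rfl hsplit)

theorem stmt_16 (m : ℕ) (hm : 1 ≤ m) (α : ℝ) (hα : 0 < α) (ztil : ℂ → ℂ)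
    (h0 : Tendsto (fun z => z / ztil z) (𝓝[≠] (0 : ℂ)) (𝓝 1))
    (h1 : Tendsto (fun z => (z / ztil z) ^ m) (𝓝[≠] (0 : ℂ)) (𝓝 1))
    (h2 : (fun z => z ^ m - ztil z ^ m) =O[𝓝[≠] (0 : ℂ)]
      fun z => ‖z‖ ^ (α + m)) :
    (fun z => z - ztil z) =O[𝓝[≠] (0 : ℂ)] fun z => ‖z‖ ^ (α + 1) :=
  stmt_16_general m hm α ztil h0 h2
end
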